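/- arXiv:1007.1927 — 7 statements merged into one kernel-verified Lean document; each statement's English description precedes it below -/
import Mathlib

section
/- Let H be a subgroup of an abelian topological group G that is both dually closed (H is the intersection of the kernels of all continuous characters of G vanishing on H) and dually embedded (every continuous character of H extends to one of G). Then for every subset S of H, the quasi-convex hull of S in H equals the quasi-convex hull of S in G: Q_H(S) = Q_G(S). -/
open Filter Topology

noncomputable section

abbrev 𝕋 := AddCircle (1 : ℝ)

/-- `T₊ = π([-1/4, 1/4]) ⊆ 𝕋`. -/
def Tplus : Set 𝕋 := {x | ∃ r : ℝ, |r| ≤ 1/4 ∧ (r : 𝕋) = x}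

/-- The polar `E^▷`: continuous characters mapping `E` into `T₊`. -/
def polar (G : Type*) [AddCommGroup G] [TopologicalSpace G] (E : Set G) :
    Set (G →+ 𝕋) := {χ | Continuous χ ∧ ∀ x ∈ E, χ x ∈ Tplus}

/-- The quasi-convex hull `Q_G(E) = E^▷◁`. -/
def qcHull (G : Type*) [AddCommGroup G] [TopologicalSpace G] (E : Set G) : Set G :=
  {x | ∀ χ ∈ polar G E, χ x ∈ Tplus}

/-- The set `S = {0} ∪ {± x_n | n ∈ ℕ}` associated to a sequence. -/
def seqSet {G : Type*} [AddCommGroup G] (x : ℕ → G) : Set G :=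
  {0} ∪ {y | ∃ n, y = x n ∨ y = - x n}

/-- `X = {0} ∪ {±(1/b_n mod 1) | n ∈ ℕ} ⊆ 𝕋`. -/
def Xset (b : ℕ → ℕ) : Set 𝕋 :=
  {0} ∪ {x | ∃ n, x = (((b n : ℝ)⁻¹ : ℝ) : 𝕋) ∨ x = -(((b n : ℝ)⁻¹ : ℝ) : 𝕋)}

/-! A character vanishing on `E` vanishes on `Q_G(E)`, because
all its multiples lie in `E^▷` and `T₊` contains no nontrivial subgroup of `𝕋`; with dual closedness
this puts `Q_G(S)` inside `H`. On `H`, the polars of `S` in `H` and in `G` correspond under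
restriction, which is onto the continuous characters of `H` by dual embeddedness. -/

lemma mem_Tplus_iff_norm_le {x : 𝕋} : x ∈ Tplus ↔ ‖x‖ ≤ 1/4 := by
  obtain ⟨y, rfl⟩ := QuotientAddGroup.mk_surjective x
  constructor
  · rintro ⟨r, hr, hry⟩
    rwa [← hry, (AddCircle.norm_coe_eq_abs_iff (1 : ℝ) one_ne_zero).mpr (by norm_num; linarith)]
  · intro hy
    refine ⟨y - round y, ?_, by simp⟩
    rwa [← UnitAddCircle.norm_eq]

lemma norm_two_nsmul_of_mem_Tplus {x : 𝕋} (hx : x ∈ Tplus) : ‖2 • x‖ = 2 * ‖x‖ := by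
  obtain ⟨r, hr, rfl⟩ := hx
  have norm_coe : ∀ s : ℝ, |s| ≤ 1/2 → ‖(s : 𝕋)‖ = |s| := fun s hs =>
    (AddCircle.norm_coe_eq_abs_iff (1 : ℝ) one_ne_zero).mpr (by norm_num; linarith)
  rw [← AddCircle.coe_nsmul, norm_coe _ (by rw [nsmul_eq_mul, abs_mul]; norm_num; linarith),
    norm_coe r (by linarith), nsmul_eq_mul, abs_mul]
  norm_num

lemma eq_zero_of_forall_nsmul_mem_Tplus {x : 𝕋} (h : ∀ n : ℕ, n • x ∈ Tplus) : x = 0 := by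
  have norm_pow_two_nsmul : ∀ k : ℕ, ‖2 ^ k • x‖ = 2 ^ k * ‖x‖ := by
    intro k
    induction k with
    | zero => simp
    | succ k ih => rw [pow_succ', mul_nsmul', norm_two_nsmul_of_mem_Tplus (h _), ih, pow_succ',
        mul_assoc]
  by_contra hx
  obtain ⟨k, hk⟩ := pow_unbounded_of_one_lt ((1/4) / ‖x‖) one_lt_two
  have hbound : 2 ^ k * ‖x‖ ≤ 1/4 := by
    rw [← norm_pow_two_nsmul, ← mem_Tplus_iff_norm_le]
    exact h _
  rw [div_lt_iff₀ (norm_pos_iff.mpr hx)] at hk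
  linarith

section qcHull

variable {A G : Type*} [AddCommGroup A] [TopologicalSpace A] [AddCommGroup G] [TopologicalSpace G]

lemma map_eq_zero_of_mem_qcHull {E : Set G} {χ : G →+ 𝕋} (hχ : Continuous χ)
    (hχE : ∀ x ∈ E, χ x = 0) {x : G} (hx : x ∈ qcHull G E) : χ x = 0 := by
  refine eq_zero_of_forall_nsmul_mem_Tplus fun n => ?_
  have hn : n • χ ∈ polar G E :=
    ⟨hχ.nsmul n, fun y hy => ⟨0, by norm_num, by simp [hχE y hy]⟩⟩
  simpa using hx _ hn

lemma preimage_qcHull_image {f : A →+ G} (hf : Continuous f)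
    (hext : ∀ χ : A →+ 𝕋, Continuous χ → ∃ ψ : G →+ 𝕋, Continuous ψ ∧ ∀ a, ψ (f a) = χ a)
    (S : Set A) : f ⁻¹' qcHull G (f '' S) = qcHull A S := by
  ext a
  constructor
  · rintro ha χ ⟨hχ, hχS⟩
    obtain ⟨ψ, hψ, hψχ⟩ := hext χ hχ
    rw [← hψχ]
    exact ha ψ ⟨hψ, by rintro _ ⟨s, hs, rfl⟩; rw [hψχ]; exact hχS s hs⟩
  · rintro ha ψ ⟨hψ, hψS⟩
    exact ha (ψ.comp f) ⟨hψ.comp hf, fun s hs => hψS _ ⟨s, hs, rfl⟩⟩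

end qcHull

theorem stmt2_general {G : Type*} [AddCommGroup G] [TopologicalSpace G]
    (H : AddSubgroup G)
    (hdc : (H : Set G) =
      {x : G | ∀ χ : G →+ 𝕋, Continuous χ → (∀ h ∈ H, χ h = 0) → χ x = 0})
    (hde : ∀ χ : ↥H →+ 𝕋, Continuous χ → ∃ ψ : G →+ 𝕋, Continuous ψ ∧ ∀ h : ↥H, ψ h = χ h)
    (S : Set ↥H) :
    ((↑) '' qcHull ↥H S : Set G) = qcHull G ((↑) '' S) := by
  have hsub : qcHull G ((↑) '' S) ⊆ H := by
    rw [hdc]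
    exact fun x hx χ hχ hχH =>
      map_eq_zero_of_mem_qcHull hχ (by rintro _ ⟨s, -, rfl⟩; exact hχH s s.2) hx
  have hpre := preimage_qcHull_image (f := H.subtype) continuous_subtype_val hde S
  rw [H.coe_subtype] at hpre
  rw [← hpre, Set.image_preimage_eq_of_subset (by rwa [Subtype.range_coe])]

/-- if `H` is dually closed and dually embedded in `G`,
then `Q_H(S) = Q_G(S)` for every `S ⊆ H`. -/
theorem stmt2 {G : Type*} [AddCommGroup G] [TopologicalSpace G] [IsTopologicalAddGroup G]
    (H : AddSubgroup G)
    (hdc : (H : Set G) =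
      {x : G | ∀ χ : G →+ 𝕋, Continuous χ → (∀ h ∈ H, χ h = 0) → χ x = 0})
    (hde : ∀ χ : ↥H →+ 𝕋, Continuous χ → ∃ ψ : G →+ 𝕋, Continuous ψ ∧ ∀ h : ↥H, ψ h = χ h)
    (S : Set ↥H) :
    ((↑) '' qcHull ↥H S : Set G) = qcHull G ((↑) '' S) :=
  stmt2_general H hdc hde S
end
end

section
/- If H is an open subgroup of an abelian topological group G, then H is dually closed in G: H equals the intersection of the kernels of all continuous characters of G that vanish on H. -/
open Filter Topology

noncomputable section

/-!
Since `H` is open, `G ⧸ H` is discrete, so every character of `G ⧸ H` is continuous, and so is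
its pull-back to `G`, which vanishes on `H`. Since `ℚ ⧸ ℤ` is an injective `ℤ`-module and embeds
in `ℝ ⧸ ℤ`, the characters of the abstract group `G ⧸ H` separate its points: for `x ∉ H` some
character is nonzero at the class of `x`.
-/

section RatCircle

variable (𝕜 : Type*) [DivisionRing 𝕜] [CharZero 𝕜]

def AddCircle.ratCast : AddCircle (1 : ℚ) →+ AddCircle (1 : 𝕜) :=
  QuotientAddGroup.map _ _ (Rat.castHom 𝕜).toAddMonoidHom <| by
    rintro _ ⟨n, rfl⟩
    exact ⟨n, by simp⟩

theorem AddCircle.ratCast_injective : Function.Injective (AddCircle.ratCast 𝕜) := by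
  rw [injective_iff_map_eq_zero]
  intro x hx
  induction x using QuotientAddGroup.induction_on with
  | H q =>
    obtain ⟨n, hn⟩ := (AddCircle.coe_eq_zero_iff (1 : 𝕜)).mp hx
    refine (AddCircle.coe_eq_zero_iff (1 : ℚ)).mpr ⟨n, ?_⟩
    rw [zsmul_one] at hn ⊢
    exact Rat.cast_injective (α := 𝕜) (by simpa using hn)

end RatCircle

theorem exists_addMonoidHom_circle_apply_ne_zero {A : Type*} [AddCommGroup A] {a : A}
    (ha : a ≠ 0) : ∃ χ : A →+ 𝕋, χ a ≠ 0 := by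
  obtain ⟨c, hc⟩ := CharacterModule.exists_character_apply_ne_zero_of_ne_zero ha
  exact ⟨(AddCircle.ratCast ℝ).comp (c : A →+ AddCircle (1 : ℚ)),
    (map_ne_zero_iff _ (AddCircle.ratCast_injective ℝ)).mpr hc⟩

theorem AddSubgroup.exists_continuous_character_of_isOpen {G : Type*} [AddCommGroup G]
    [TopologicalSpace G] [SeparatelyContinuousAdd G] {H : AddSubgroup G}
    (hH : IsOpen (H : Set G)) {x : G} (hx : x ∉ H) :
    ∃ χ : G →+ 𝕋, Continuous χ ∧ (∀ h ∈ H, χ h = 0) ∧ χ x ≠ 0 := by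
  have : DiscreteTopology (G ⧸ H) := QuotientAddGroup.discreteTopology hH
  obtain ⟨χ, hχ⟩ := exists_addMonoidHom_circle_apply_ne_zero
    (mt (QuotientAddGroup.eq_zero_iff x).mp hx)
  have hχc : Continuous χ := continuous_of_discreteTopology
  refine ⟨χ.comp (QuotientAddGroup.mk' H), hχc.comp QuotientAddGroup.continuous_mk,
    fun h hh => ?_, hχ⟩
  rw [AddMonoidHom.comp_apply, QuotientAddGroup.mk'_apply, (QuotientAddGroup.eq_zero_iff h).mpr hh,
    map_zero]

/-- an open subgroup of an abelian topological group is dually closed. -/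
theorem stmt3 {G : Type*} [AddCommGroup G] [TopologicalSpace G] [IsTopologicalAddGroup G]
    (H : AddSubgroup G) (hH : IsOpen (H : Set G)) :
    (H : Set G) =
      {x : G | ∀ χ : G →+ 𝕋, Continuous χ → (∀ h ∈ H, χ h = 0) → χ x = 0} := by
  refine Set.Subset.antisymm (fun x hx χ _ hχH => hχH x hx) fun x hx => ?_
  by_contra hxH
  obtain ⟨χ, hχ, hχH, hχx⟩ := H.exists_continuous_character_of_isOpen hH hxH
  exact hχx (hx χ hχ hχH)
end
end

section
/- If H is an open subgroup of an abelian topological group G, then H is dually embedded in G: every continuous character of H extends to a continuous character of G. -/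
open Filter Topology

noncomputable section

@[to_additive]
theorem MonoidHom.continuous_of_continuous_comp_subtype_of_isOpen {G M : Type*} [Group G]
    [TopologicalSpace G] [IsTopologicalGroup G] [MulOneClass M] [TopologicalSpace M]
    [ContinuousMul M] (f : G →* M) {H : Subgroup G} (hH : IsOpen (H : Set G))
    (hf : Continuous (f.comp H.subtype)) : Continuous f :=
  have hfH : ContinuousOn f H := continuousOn_iff_continuous_domRestrict.mpr hf
  continuous_of_continuousAt_one f (hfH.continuousAt (hH.mem_nhds H.one_mem))

/-- an open subgroup of an abelian topological group is dually embedded. -/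
theorem stmt4 {G : Type*} [AddCommGroup G] [TopologicalSpace G] [IsTopologicalAddGroup G]
    (H : AddSubgroup G) (hH : IsOpen (H : Set G))
    (χ : ↥H →+ 𝕋) (hχ : Continuous χ) :
    ∃ ψ : G →+ 𝕋, Continuous ψ ∧ ∀ h : ↥H, ψ h = χ h := by
  obtain ⟨ψ, hψ⟩ := (Module.Baer.of_divisible 𝕋).extension_property_addMonoidHom
    H.subtype Subtype.val_injective χ
  refine ⟨ψ, ψ.continuous_of_continuous_comp_subtype_of_isOpen hH ?_, DFunLike.congr_fun hψ⟩
  rwa [hψ]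
end
end

section
/- Let {q_n} be positive integers with b_n = q_0···q_n, and X = {0} ∪ {±(1/b_n mod 1) | n ∈ ℕ} ⊆ T. Suppose q_k ≥ 4. Then for every m with 1 ≤ m ≤ [q_k/4] (where [x] = max{n ∈ ℤ | n ≤ x}), the character η of T given by η(t) = m·b_{k-1}·t (with b_{-1} = 1) satisfies η(X) ⊆ T₊. If additionally q_{k+1} ≥ 4, then the character t ↦ (q_k − 1)·b_{k-1}·t also maps X into T₊. -/
open Filter Topology

noncomputable section

/-! An element `c • (1 / b)` of `𝕋` lies in `T₊` as soon as `c` is within `b / 4` of a multiple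
of `b`. With `b = B (n + 1)`, the multiplier `m B k` (resp. `(q k - 1) B k`) is a multiple of `b`
when `n < k`, and lies in `[0, b / 4]` when `n ≥ k` (resp. `n > k`), because `4 m ≤ q k`
(resp. `4 ≤ q (k + 1)`). In the remaining case `n = k`, `(q k - 1) B k = B (k + 1) - B k` with
`4 B k ≤ B (k + 1)`. -/

lemma Tplus_neg {x : 𝕋} (hx : x ∈ Tplus) : -x ∈ Tplus := by
  obtain ⟨r, hr, rfl⟩ := hx
  exact ⟨-r, by rwa [abs_neg], AddCircle.coe_neg _⟩

lemma coe_mem_Tplus_of_abs_sub_intCast_le {r : ℝ} (j : ℤ) (h : |r - j| ≤ 1 / 4) :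
    (r : 𝕋) ∈ Tplus :=
  ⟨r - j, h, by simp⟩

lemma zsmul_coe_inv_mem_Tplus {c : ℤ} {b : ℕ} (hb : 0 < b) (j : ℤ) (h : 4 * |c - j * b| ≤ b) :
    c • (((b : ℝ)⁻¹ : ℝ) : 𝕋) ∈ Tplus := by
  rw [← AddCircle.coe_zsmul]
  refine coe_mem_Tplus_of_abs_sub_intCast_le j ?_
  have hbR : (0 : ℝ) < b := by exact_mod_cast hb
  have hR : (4 : ℝ) * |((c - j * b : ℤ) : ℝ)| ≤ b := by exact_mod_cast h
  have hdiv : c • (b : ℝ)⁻¹ - j = ((c - j * b : ℤ) : ℝ) / b := by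
    rw [zsmul_eq_mul]; push_cast; field_simp
  rw [hdiv, abs_div, Nat.abs_cast, div_le_iff₀ hbR]
  linarith

lemma zsmul_mem_Tplus_of_mem_Xset {b : ℕ → ℕ} (hb : ∀ n, 0 < b n) {c : ℤ}
    (hc : ∀ n, ∃ j : ℤ, 4 * |c - j * b n| ≤ b n) : ∀ x ∈ Xset b, c • x ∈ Tplus := by
  rintro x (hx | ⟨n, hx | hx⟩)
  · rw [Set.mem_singleton_iff.mp hx, smul_zero]
    exact ⟨0, by norm_num, by simp⟩
  all_goals obtain ⟨j, hj⟩ := hc n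
  · exact hx ▸ zsmul_coe_inv_mem_Tplus (hb n) j hj
  · rw [hx, smul_neg]
    exact Tplus_neg (zsmul_coe_inv_mem_Tplus (hb n) j hj)

lemma exists_near_multiple_of_dvd (c : ℤ) {a b : ℕ} (hba : b ∣ a) :
    ∃ j : ℤ, 4 * |c * a - j * b| ≤ b := by
  obtain ⟨t, rfl⟩ := hba
  exact ⟨c * t, by push_cast; ring_nf; simp⟩

lemma exists_near_multiple_of_four_mul_le {c : ℤ} {b : ℕ} (hc : 0 ≤ c) (h : 4 * c ≤ b) :
    ∃ j : ℤ, 4 * |c - j * b| ≤ b :=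
  ⟨0, by rwa [zero_mul, sub_zero, abs_of_nonneg hc]⟩

section PartialProducts

variable {q B : ℕ → ℕ}

lemma dvd_of_succ_eq_mul (hB : ∀ n, B (n + 1) = B n * q n) {i j : ℕ} (hij : i ≤ j) :
    B i ∣ B j :=
  Nat.rel_of_forall_rel_succ_of_le (· ∣ ·) (fun n => hB n ▸ dvd_mul_right _ _) hij

lemma monotone_of_succ_eq_mul (hq : ∀ n, 0 < q n) (hB : ∀ n, B (n + 1) = B n * q n) :
    Monotone B :=
  monotone_nat_of_le_succ fun n => hB n ▸ Nat.le_mul_of_pos_right _ (hq n)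

lemma pos_of_succ_eq_mul (hq : ∀ n, 0 < q n) (hB0 : B 0 = 1)
    (hB : ∀ n, B (n + 1) = B n * q n) (n : ℕ) : 0 < B n := by
  induction n with
  | zero => simp [hB0]
  | succ n ih => rw [hB]; exact Nat.mul_pos ih (hq n)

end PartialProducts

/-- the characters `m·η_k` (`1 ≤ m ≤ [q_k/4]`) lie in `X^▷`,
and if moreover `q_{k+1} ≥ 4`, so does `(q_k - 1)·η_k`.
Here `B k = b_{k-1}` (with `b_{-1} = 1`) and `η_k(t) = b_{k-1}·t`. -/
theorem stmt11 (q : ℕ → ℕ) (hq : ∀ n, 0 < q n)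
    (B : ℕ → ℕ) (hB0 : B 0 = 1) (hB : ∀ n, B (n + 1) = B n * q n)
    (k : ℕ) (hqk : 4 ≤ q k) :
    (∀ m : ℤ, 1 ≤ m → m ≤ ⌊(q k : ℝ) / 4⌋ →
      ∀ x ∈ Xset (fun n => B (n + 1)), (m * (B k : ℤ)) • x ∈ Tplus) ∧
    (4 ≤ q (k + 1) →
      ∀ x ∈ Xset (fun n => B (n + 1)), (((q k : ℤ) - 1) * (B k : ℤ)) • x ∈ Tplus) := by
  have hBpos := pos_of_succ_eq_mul hq hB0 hB
  have hBmono := monotone_of_succ_eq_mul hq hB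
  refine ⟨fun m hm1 hm2 => zsmul_mem_Tplus_of_mem_Xset (fun n => hBpos _) fun n => ?_,
    fun hqk1 => zsmul_mem_Tplus_of_mem_Xset (fun n => hBpos _) fun n => ?_⟩
  · have hm4 : 4 * m ≤ q k := by
      have := Int.le_floor.mp hm2
      exact_mod_cast (by linarith : (4 * m : ℝ) ≤ q k)
    rcases lt_or_ge n k with hnk | hkn
    · exact exists_near_multiple_of_dvd m (dvd_of_succ_eq_mul hB hnk)
    · have hle : B k * q k ≤ B (n + 1) := hB k ▸ hBmono (by omega)
      refine exists_near_multiple_of_four_mul_le (by positivity) ?_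
      calc 4 * (m * B k) = 4 * m * B k := by ring
        _ ≤ q k * B k := by gcongr
        _ ≤ B (n + 1) := by rw [mul_comm]; exact_mod_cast hle
  · rcases lt_trichotomy n k with hnk | rfl | hkn
    · exact exists_near_multiple_of_dvd _ (dvd_of_succ_eq_mul hB hnk)
    · refine ⟨1, ?_⟩
      rw [hB, Nat.cast_mul, show ((q n : ℤ) - 1) * B n - 1 * (B n * q n) = -(B n : ℤ) by ring,
        abs_neg, Nat.abs_cast]
      exact_mod_cast Nat.mul_comm 4 _ ▸ Nat.mul_le_mul_left (B n) hqk
    · have hle : B k * q k * q (k + 1) ≤ B (n + 1) := by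
        rw [← hB, ← hB]; exact hBmono (by omega)
      refine exists_near_multiple_of_four_mul_le
        (mul_nonneg (by omega) (by positivity)) ?_
      calc 4 * ((q k - 1) * B k : ℤ) ≤ B k * q k * 4 := by nlinarith [hBpos k]
        _ ≤ B k * q k * q (k + 1) := by gcongr; exact_mod_cast hqk1
        _ ≤ B (n + 1) := by exact_mod_cast hle
end
end

section
/- Let z ∈ T be identified with its representative in (−1/2, 1/2], and suppose z = Σ_{i≥0} c_i/d_i is a standard representation with respect to a divisibility chain d_0 | d_1 | ⋯ (d_{-1} = 1). If m·z ∈ T₊ for all m = 1, …, ⌈d_0/6⌉ (where ⌈x⌉ = min{n ∈ ℤ : x < n}), then c_0 ∈ {−1, 0, 1}. -/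
open Filter Topology

noncomputable section

/-!
If `|c₀| ≥ 2`, then `z` lies within `1/(2d₀)` of `c₀/d₀`, so `|z| ≥ 3/(2d₀)`. The first multiple
`m|z|` exceeding `1/4` then satisfies `1/4 < m|z| ≤ 1/2` and `m ≤ ⌊1/(4|z|)⌋ + 1 ≤ ⌊d₀/6⌋ + 1`;
but a real number of absolute value in `(1/4, 3/4)` does not project into `T₊`.
-/

lemma coe_notMem_Tplus {x : ℝ} (h₁ : 1 / 4 < |x|) (h₂ : |x| < 3 / 4) : (x : 𝕋) ∉ Tplus := by
  rintro ⟨r, hr, hrx⟩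
  obtain ⟨k, hk⟩ : ∃ k : ℤ, k = x - r := by
    rw [eq_comm, QuotientAddGroup.eq_iff_sub_mem, AddSubgroup.mem_zmultiples_iff] at hrx
    simpa using hrx
  have hk0 : |(k : ℝ)| < 1 := by
    calc |(k : ℝ)| = |x - r| := by rw [hk]
      _ ≤ |x| + |r| := abs_sub _ _
      _ < 1 := by linarith
  have hx : x = r := by
    have : k = 0 := by
      rwa [← Int.cast_abs, ← Int.cast_one, Int.cast_lt, Int.abs_lt_one_iff] at hk0
    rw [this, Int.cast_zero] at hk
    linarith
  rw [hx] at h₁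
  linarith

lemma exists_int_mul_mem_Ioc {w : ℝ} (hw₀ : 0 < w) (hw : w ≤ 1 / 2) :
    ∃ m : ℤ, 1 ≤ m ∧ m ≤ ⌊1 / (4 * w)⌋ + 1 ∧ 1 / 4 < m * w ∧ m * w ≤ 1 / 2 := by
  refine ⟨⌊1 / (4 * w)⌋ + 1, ?_, le_rfl, ?_, ?_⟩
  · have : 0 ≤ ⌊1 / (4 * w)⌋ := Int.floor_nonneg.2 (by positivity)
    omega
  · have h := Int.lt_floor_add_one (1 / (4 * w))
    rw [div_lt_iff₀ (by positivity)] at h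
    push_cast
    linarith
  -- Either `m = 1`, or `4w ≤ 1` and the overshoot `m w - 1/4` is at most `w`.
  · rcases (Int.floor_nonneg.2 (by positivity : 0 ≤ 1 / (4 * w))).eq_or_lt with h | h
    · rw [← h]
      simpa using hw
    · have hw4 : 4 * w ≤ 1 := by
        have : (1 : ℝ) ≤ 1 / (4 * w) := by
          simpa using Int.le_floor.1 (show (1 : ℤ) ≤ ⌊1 / (4 * w)⌋ by omega)
        rwa [le_div_iff₀ (by positivity), one_mul] at this
      have h' := Int.floor_le (1 / (4 * w))
      rw [le_div_iff₀ (by positivity)] at h'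
      push_cast
      linarith

lemma three_div_le_abs_of_abs_sub_le {z n : ℝ} {c : ℤ} (hn : 0 < n) (hc : 2 ≤ |(c : ℝ)|)
    (h : |z - c / n| ≤ 1 / (2 * n)) : 3 / (2 * n) ≤ |z| := by
  have hcn : 2 / n ≤ |c / n| := by
    rw [abs_div, abs_of_pos hn]
    gcongr
  have htri : |(c : ℝ) / n| - |z| ≤ |z - c / n| := by
    rw [abs_sub_comm]
    exact abs_sub_abs_le_abs_sub _ _
  have : 3 / (2 * n) = 2 / n - 1 / (2 * n) := by field_simp; ring
  linarith

theorem stmt13_general (d : ℕ → ℕ) (hd0 : 0 < d 0)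
    (c : ℕ → ℤ) (z : ℝ) (hz : z ∈ Set.Ioc (-(1 / 2) : ℝ) (1 / 2))
    (hstd2 : ∀ k, |z - ∑ i ∈ Finset.range (k + 1), (c i : ℝ) / d i| ≤ 1 / (2 * d k))
    (hT : ∀ m : ℤ, 1 ≤ m → m ≤ ⌊(d 0 : ℝ) / 6⌋ + 1 →
      (((m : ℝ) * z : ℝ) : 𝕋) ∈ Tplus) :
    c 0 = -1 ∨ c 0 = 0 ∨ c 0 = 1 := by
  by_contra hc
  have hc2 : (2 : ℝ) ≤ |(c 0 : ℝ)| := by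
    rw [← Int.cast_abs]
    exact_mod_cast (show 2 ≤ |c 0| by cases abs_cases (c 0) <;> omega)
  have hd : (0 : ℝ) < d 0 := by exact_mod_cast hd0
  have hz₀ : 3 / (2 * d 0) ≤ |z| :=
    three_div_le_abs_of_abs_sub_le hd hc2 (by simpa using hstd2 0)
  have hz_pos : 0 < |z| := lt_of_lt_of_le (by positivity) hz₀
  obtain ⟨m, hm1, hm, hlow, hhigh⟩ := exists_int_mul_mem_Ioc hz_pos (abs_le.2 ⟨hz.1.le, hz.2⟩)
  have hmd : m ≤ ⌊(d 0 : ℝ) / 6⌋ + 1 := by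
    have h : 1 / (4 * |z|) ≤ (d 0 : ℝ) / 6 := by
      rw [div_le_div_iff₀ (by positivity) (by norm_num)]
      rw [div_le_iff₀ (by positivity)] at hz₀
      linarith
    linarith [Int.floor_mono h]
  have hmz : |(m : ℝ) * z| = m * |z| := by
    rw [abs_mul, abs_of_pos (by exact_mod_cast hm1)]
  exact coe_notMem_Tplus (by rwa [hmz]) (by rw [hmz]; linarith) (hT m hm1 hmd)

/-- if `z = Σ c_i/d_i` is a standard representation and
`m·z ∈ T₊` for all `m = 1, …, ⌈d_0/6⌉` (strict ceiling `⌈x⌉ = min{n | x < n}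
 = ⌊x⌋ + 1`), then `c_0 ∈ {-1, 0, 1}`. -/
theorem stmt13 (d : ℕ → ℕ) (hd0 : 0 < d 0) (hdiv : ∀ i, d i ∣ d (i + 1))
    (hmono : StrictMono d)
    (c : ℕ → ℤ) (z : ℝ) (hz : z ∈ Set.Ioc (-(1 / 2) : ℝ) (1 / 2))
    (hsum : HasSum (fun i => (c i : ℝ) / d i) z)
    (hstd1a : |(c 0 : ℝ)| ≤ (d 0 : ℝ) / 2)
    (hstd1 : ∀ i, |(c (i + 1) : ℝ)| ≤ (d (i + 1) : ℝ) / (2 * d i))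
    (hstd2 : ∀ k, |z - ∑ i ∈ Finset.range (k + 1), (c i : ℝ) / d i| ≤ 1 / (2 * d k))
    (hstd3 : ∀ k, |z - ∑ i ∈ Finset.range (k + 1), (c i : ℝ) / d i| = 1 / (2 * d k) →
      |(c k : ℝ) / d k| < |z - ∑ i ∈ Finset.range k, (c i : ℝ) / d i|)
    (hT : ∀ m : ℤ, 1 ≤ m → m ≤ ⌊(d 0 : ℝ) / 6⌋ + 1 →
      (((m : ℝ) * z : ℝ) : 𝕋) ∈ Tplus) :
    c 0 = -1 ∨ c 0 = 0 ∨ c 0 = 1 :=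
  stmt13_general d hd0 c z hz hstd2 hT
end
end

section
/- With the same setup (z ∈ T with standard representation z = Σ c_i/d_i), if m·z ∈ T₊ for all m = 1, …, [d_0/4] and also for m = d_0 − 1, then c_0 ∈ {−1, 0, 1}. -/
/-!
Write `N = d₀`, `A = c₀`, `α = A / N` and `z = α + ε` with `N |ε| ≤ 1/2`; by the symmetry
`z ↦ -z` we may assume `A ≥ 2`, so `N ≥ 4` and `|ε| < α`. The case `m = 1` gives `|z| ≤ 1/4`.
Since `(N - 1) z ≡ N ε - z (mod 1)` and `|N ε - z| ≤ 3/4`, the case `m = N - 1` forces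
`|N ε - z| ≤ 1/4` (the boundary value `3/4` is excluded by the tie-breaking rule of the standard
representation), whence `α - 1/4 ≤ (N - 1) ε` and `α ≤ 1/4`. Finally `m = ⌊1 / (2α)⌋ ≤ N/4`
puts `m α` in `(1/2 - α, 1/2]`, so `m z ∈ T₊` forces `m ε < α - 1/4 ≤ (N - 1) ε`, which is
impossible for `ε < 0` and `m < N - 1`.
-/

open Filter Topology

noncomputable section

lemma exists_int_abs_sub_le_of_coe_mem_Tplus {x : ℝ} (h : (x : 𝕋) ∈ Tplus) :
    ∃ k : ℤ, |x - k| ≤ 1 / 4 := by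
  obtain ⟨r, hr, hrx⟩ := h
  obtain ⟨k, hk⟩ := AddSubgroup.mem_zmultiples_iff.mp (QuotientAddGroup.eq_iff_sub_mem.mp hrx)
  refine ⟨-k, ?_⟩
  have : (k : ℝ) = r - x := by simpa using hk
  rwa [show x - ((-k : ℤ) : ℝ) = r by push_cast; linarith]

lemma abs_le_quarter_or_eq_of_coe_mem_Tplus {x : ℝ} (h : (x : 𝕋) ∈ Tplus) (hx : |x| ≤ 3 / 4) :
    |x| ≤ 1 / 4 ∨ |x| = 3 / 4 := by
  obtain ⟨k, hk⟩ := exists_int_abs_sub_le_of_coe_mem_Tplus h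
  rw [abs_le] at hk hx
  have hk2 : k < 2 := by exact_mod_cast (show (k : ℝ) < 2 by linarith)
  have hk2' : -2 < k := by exact_mod_cast (show (-2 : ℝ) < k by linarith)
  obtain rfl | rfl | rfl : k = -1 ∨ k = 0 ∨ k = 1 := by omega
  all_goals norm_num at hk
  · exact .inr (by rw [abs_of_neg (by linarith)]; linarith)
  · exact .inl (abs_le.mpr hk)
  · exact .inr (by rw [abs_of_pos (by linarith)]; linarith)

lemma abs_le_quarter_of_coe_mem_Tplus {x : ℝ} (h : (x : 𝕋) ∈ Tplus) (hx : |x| < 3 / 4) :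
    |x| ≤ 1 / 4 :=
  (abs_le_quarter_or_eq_of_coe_mem_Tplus h hx.le).resolve_right hx.ne

lemma neg_mem_Tplus {x : 𝕋} (h : x ∈ Tplus) : -x ∈ Tplus := by
  obtain ⟨r, hr, rfl⟩ := h
  exact ⟨-r, by rwa [abs_neg], AddCircle.coe_neg _⟩

lemma coe_add_intCast (x : ℝ) (k : ℤ) : ((x + k : ℝ) : 𝕋) = x := by
  rw [AddCircle.coe_add, add_eq_left, AddCircle.coe_eq_zero_iff]
  exact ⟨k, by simp⟩

lemma exists_mul_le_half_lt_add_one_mul {α : ℝ} (hα : 0 < α) (hα' : α ≤ 1 / 2) :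
    ∃ m : ℤ, 1 ≤ m ∧ m * α ≤ 1 / 2 ∧ 1 / 2 < (m + 1) * α := by
  refine ⟨⌊1 / (2 * α)⌋, ?_, ?_, ?_⟩
  · rw [Int.le_floor, Int.cast_one, le_div_iff₀ (by positivity)]; linarith
  · rw [← le_div_iff₀ hα, div_div]; exact Int.floor_le _
  · rw [← div_lt_iff₀ hα, div_div]; exact Int.lt_floor_add_one _

lemma abs_mul_sub_le_quarter {N α ε : ℝ} (hN : 0 < N) (hNε : |N * ε| ≤ 1 / 2) (hεα : |ε| < α)
    (hz : |α + ε| ≤ 1 / 4) (heq : |N * ε| = 1 / 2 → α < |α + ε|)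
    (hT : ((N * ε - (α + ε) : ℝ) : 𝕋) ∈ Tplus) : |N * ε - (α + ε)| ≤ 1 / 4 := by
  have hbound : |N * ε - (α + ε)| ≤ 3 / 4 := by linarith [abs_sub (N * ε) (α + ε)]
  refine (abs_le_quarter_or_eq_of_coe_mem_Tplus hT hbound).resolve_right fun h => ?_
  have hNε' := abs_le.mp hNε
  have hz' := abs_le.mp hz
  have hε' := neg_abs_le ε
  rcases (abs_eq (by norm_num)).mp h with h | h
  · linarith
  · have hα : α < 1 / 4 := by
      have := heq (by rw [show N * ε = -(1 / 2) by linarith]; norm_num)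
      rwa [show α + ε = 1 / 4 by linarith, abs_of_pos (by norm_num)] at this
    have : 0 < N * ε := mul_pos hN (by linarith)
    linarith

lemma mul_lt_sub_quarter {α ε μ : ℝ} (hα : α ≤ 1 / 4) (hμα : μ * α ≤ 1 / 2)
    (hμα' : 1 / 2 < (μ + 1) * α) (hμε : |μ * ε| ≤ 1 / 8) (hT : ((μ * (α + ε) : ℝ) : 𝕋) ∈ Tplus) :
    μ * ε < α - 1 / 4 := by
  have hμε' := abs_le.mp hμε
  have hμz : |μ * (α + ε)| < 3 / 4 := by rw [abs_of_pos] <;> linarith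
  linarith [(abs_le.mp (abs_le_quarter_of_coe_mem_Tplus hT hμz)).2]

theorem sub_one_mul_notMem_Tplus {N α ε : ℝ} {A : ℤ} (hA : 2 ≤ A) (hαN : α * N = A)
    (hAN : (A : ℝ) ≤ N / 2) (hNε : N * |ε| ≤ 1 / 2) (heq : N * |ε| = 1 / 2 → α < |α + ε|)
    (hT : ∀ m : ℤ, 1 ≤ m → (m : ℝ) ≤ N / 4 → ((m * (α + ε) : ℝ) : 𝕋) ∈ Tplus) :
    (((N - 1) * (α + ε) : ℝ) : 𝕋) ∉ Tplus := by
  intro hT2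
  have hA2 : (2 : ℝ) ≤ A := by exact_mod_cast hA
  have hN : 4 ≤ N := by linarith
  have hα : α ≤ 1 / 2 := by nlinarith
  have hεα : |ε| < α := by
    rw [← mul_lt_mul_iff_right₀ (show 0 < N by linarith)]; linarith
  have hα0 : 0 < α := by linarith [abs_nonneg ε]
  have hε8 : |ε| ≤ 1 / 8 := by nlinarith
  have hz4 : |α + ε| ≤ 1 / 4 := by
    refine abs_le_quarter_of_coe_mem_Tplus (by simpa using hT 1 le_rfl (by linarith)) ?_
    linarith [abs_add_le α ε, abs_of_pos hα0]
  have hNz : |N * ε - (α + ε)| ≤ 1 / 4 := by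
    refine abs_mul_sub_le_quarter (by linarith) (by rwa [abs_mul, abs_of_pos (by linarith)])
      hεα hz4 (fun h => heq (by rwa [abs_mul, abs_of_pos (by linarith)] at h)) ?_
    rwa [show (N - 1) * (α + ε) = N * ε - (α + ε) + A by linear_combination hαN,
      coe_add_intCast] at hT2
  have hNz' := (abs_le.mp hNz).1
  have hα4 : α ≤ 1 / 4 := by
    by_contra! hα4
    have : 0 < ε := pos_of_mul_pos_right (show 0 < (N - 1) * ε by linarith) (by linarith)
    linarith [le_abs_self (α + ε)]
  obtain ⟨m, hm1, hmα, hmα'⟩ := exists_mul_le_half_lt_add_one_mul hα0 hα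
  have hm1' : (1 : ℝ) ≤ m := by exact_mod_cast hm1
  have hmN : (m : ℝ) ≤ N / 4 := by nlinarith
  have hmε : m * ε < α - 1 / 4 := by
    refine mul_lt_sub_quarter hα4 hmα hmα' ?_ (hT m hm1 hmN)
    rw [abs_mul, abs_of_pos (by linarith)]
    nlinarith
  have hε0 : ε < 0 := by
    by_contra! hε0
    linarith [mul_nonneg (by linarith : (0 : ℝ) ≤ m) hε0]
  linarith [mul_le_mul_of_nonpos_right (show (m : ℝ) ≤ N - 1 by linarith) hε0.le]

theorem abs_le_one_of_forall_mul_mem_Tplus {N z : ℝ} {A : ℤ} (hAN : |(A : ℝ)| ≤ N / 2)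
    (hε : |z - A / N| ≤ 1 / (2 * N)) (heq : |z - A / N| = 1 / (2 * N) → |(A / N : ℝ)| < |z|)
    (hT : ∀ m : ℤ, 1 ≤ m → (m : ℝ) ≤ N / 4 → ((m * z : ℝ) : 𝕋) ∈ Tplus)
    (hT2 : (((N - 1) * z : ℝ) : 𝕋) ∈ Tplus) : |A| ≤ 1 := by
  wlog hA : 0 ≤ A generalizing A z
  · have hneg : -z - ((-A : ℤ) : ℝ) / N = -(z - A / N) := by push_cast; ring
    have hmul (x : ℝ) : ((x * -z : ℝ) : 𝕋) = -((x * z : ℝ) : 𝕋) := by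
      rw [mul_neg, AddCircle.coe_neg]
    rw [← abs_neg A]
    refine this (by simpa using hAN) (by rwa [hneg, abs_neg]) (fun h => ?_)
      (fun m hm hmN => hmul m ▸ neg_mem_Tplus (hT m hm hmN)) (hmul _ ▸ neg_mem_Tplus hT2) (by omega)
    rw [hneg, abs_neg] at h
    simpa [neg_div] using heq h
  by_contra! hA2
  rw [abs_of_nonneg hA] at hA2
  have hA2' : (2 : ℝ) ≤ A := by exact_mod_cast hA2
  have hN : 0 < N := by linarith [le_abs_self (A : ℝ)]
  obtain ⟨ε, rfl⟩ : ∃ ε, z = A / N + ε := ⟨z - A / N, by ring⟩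
  rw [add_sub_cancel_left] at hε heq
  have hNε : N * |ε| ≤ 1 / 2 := by
    calc N * |ε| ≤ N * (1 / (2 * N)) := by gcongr
      _ = 1 / 2 := by field_simp
  refine sub_one_mul_notMem_Tplus hA2 (div_mul_cancel₀ _ hN.ne') ((le_abs_self _).trans hAN) hNε
    (fun h => ?_) hT hT2
  have := heq (by rw [eq_div_iff (by positivity)]; linarith)
  rwa [abs_of_pos (by positivity)] at this

theorem stmt14_general (d : ℕ → ℕ) (c : ℕ → ℤ) (z : ℝ)
    (hstd1a : |(c 0 : ℝ)| ≤ (d 0 : ℝ) / 2)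
    (hstd2 : ∀ k, |z - ∑ i ∈ Finset.range (k + 1), (c i : ℝ) / d i| ≤ 1 / (2 * d k))
    (hstd3 : ∀ k, |z - ∑ i ∈ Finset.range (k + 1), (c i : ℝ) / d i| = 1 / (2 * d k) →
      |(c k : ℝ) / d k| < |z - ∑ i ∈ Finset.range k, (c i : ℝ) / d i|)
    (hT1 : ∀ m : ℤ, 1 ≤ m → m ≤ ⌊(d 0 : ℝ) / 4⌋ →
      (((m : ℝ) * z : ℝ) : 𝕋) ∈ Tplus)
    (hT2 : ((((d 0 : ℝ) - 1) * z : ℝ) : 𝕋) ∈ Tplus) :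
    c 0 = -1 ∨ c 0 = 0 ∨ c 0 = 1 := by
  have h := abs_le_one_of_forall_mul_mem_Tplus hstd1a (by simpa using hstd2 0)
    (by simpa using hstd3 0) (fun m hm hmN => hT1 m hm (Int.le_floor.mpr hmN)) hT2
  rw [abs_le] at h
  omega

/-- if `z = Σ c_i/d_i` is a standard representation and
`m·z ∈ T₊` for all `m = 1, …, [d_0/4]` and for `m = d_0 - 1`, then
`c_0 ∈ {-1, 0, 1}`. -/
theorem stmt14 (d : ℕ → ℕ) (hd0 : 0 < d 0) (hdiv : ∀ i, d i ∣ d (i + 1))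
    (hmono : StrictMono d)
    (c : ℕ → ℤ) (z : ℝ) (hz : z ∈ Set.Ioc (-(1 / 2) : ℝ) (1 / 2))
    (hsum : HasSum (fun i => (c i : ℝ) / d i) z)
    (hstd1a : |(c 0 : ℝ)| ≤ (d 0 : ℝ) / 2)
    (hstd1 : ∀ i, |(c (i + 1) : ℝ)| ≤ (d (i + 1) : ℝ) / (2 * d i))
    (hstd2 : ∀ k, |z - ∑ i ∈ Finset.range (k + 1), (c i : ℝ) / d i| ≤ 1 / (2 * d k))
    (hstd3 : ∀ k, |z - ∑ i ∈ Finset.range (k + 1), (c i : ℝ) / d i| = 1 / (2 * d k) →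
      |(c k : ℝ) / d k| < |z - ∑ i ∈ Finset.range k, (c i : ℝ) / d i|)
    (hT1 : ∀ m : ℤ, 1 ≤ m → m ≤ ⌊(d 0 : ℝ) / 4⌋ →
      (((m : ℝ) * z : ℝ) : 𝕋) ∈ Tplus)
    (hT2 : ((((d 0 : ℝ) - 1) * z : ℝ) : 𝕋) ∈ Tplus) :
    c 0 = -1 ∨ c 0 = 0 ∨ c 0 = 1 :=
  stmt14_general d c z hstd1a hstd2 hstd3 hT1 hT2

end
end

section
/- Let Y ⊆ R be a compact set and suppose there exists α ≠ 0 such that α·Y ⊆ (−1/2, 1/2) and π(α·Y) is quasi-convex in T = R/Z. Then Y is quasi-convex in R (with respect to characters of R, i.e., continuous homomorphisms R → T). -/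
open Filter Topology

noncomputable section

/-!
Multiplication by `α` followed by `π` is a continuous homomorphism, and such maps send
quasi-convex hulls into quasi-convex hulls; so for `x ∈ Q_ℝ(Y)` the point `π(αx)` lies in
`Q_𝕋(π(αY)) = π(αY)`, say `π(αx) = π(αy)` with `y ∈ Y`. Likewise `αx ∈ Q_ℝ(αY)`, and since
`αY ⊆ [-1/2, 1/2]` every character `z ↦ π(rz)` with `|r| ≤ 1/2` maps `αY` into `T₊`; if
`|αx| > 1/2`, one of them sends `αx` to `π(s)` with `1/4 < |s| ≤ 1/2`, outside `T₊`. Hence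
`|αx| ≤ 1/2` and `|αy| < 1/2`, so the two lifts differ by less than one period: `αx = αy`.
-/

theorem AddCircle.eq_of_coe_eq_of_abs_sub_lt {p a b : ℝ} (h : (a : AddCircle p) = b)
    (hab : |a - b| < p) : a = b := by
  obtain ⟨n, hn⟩ := (AddCircle.coe_eq_zero_iff p (x := a - b)).1
    (by rw [AddCircle.coe_sub, h, sub_self])
  have hp : 0 < p := (abs_nonneg _).trans_lt hab
  have hn1 : |(n : ℝ)| < 1 := by
    rw [← hn, zsmul_eq_mul, abs_mul, abs_of_pos hp] at hab
    exact (mul_lt_iff_lt_one_left hp).1 hab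
  have hn0 : n = 0 := Int.abs_lt_one_iff.1 (by exact_mod_cast hn1)
  rw [hn0, zero_smul] at hn
  exact sub_eq_zero.1 hn.symm

theorem abs_le_of_coe_mem_Tplus {s : ℝ} (hs : |s| < 3 / 4) (h : (s : 𝕋) ∈ Tplus) :
    |s| ≤ 1 / 4 := by
  obtain ⟨r, hr, hrs⟩ := h
  have hsr : |s - r| < 1 := (abs_sub _ _).trans_lt (by linarith)
  rwa [AddCircle.eq_of_coe_eq_of_abs_sub_lt hrs.symm hsr]

theorem subset_qcHull {G : Type*} [AddCommGroup G] [TopologicalSpace G] (E : Set G) :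
    E ⊆ qcHull G E :=
  fun x hx _ hχ => hχ.2 x hx

theorem map_mem_qcHull {G H : Type*} [AddCommGroup G] [TopologicalSpace G] [AddCommGroup H]
    [TopologicalSpace H] (f : G →+ H) (hf : Continuous f) {E : Set G} {x : G}
    (hx : x ∈ qcHull G E) : f x ∈ qcHull H (f '' E) :=
  fun χ hχ => hx (χ.comp f) ⟨hχ.1.comp hf, fun y hy => hχ.2 (f y) ⟨y, hy, rfl⟩⟩

def realChar (r : ℝ) : ℝ →+ 𝕋 :=
  (QuotientAddGroup.mk' (AddSubgroup.zmultiples (1 : ℝ))).comp (AddMonoidHom.mulLeft r)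

theorem coe_realChar (r : ℝ) : ⇑(realChar r) = fun z : ℝ => ((r * z : ℝ) : 𝕋) := rfl

theorem continuous_realChar (r : ℝ) : Continuous (realChar r) :=
  continuous_quotient_mk'.comp (continuous_const_mul r)

theorem abs_le_of_forall_coe_mul_mem_Tplus {x a : ℝ} (ha : 0 < a)
    (h : ∀ r : ℝ, |r| * a ≤ 1 / 4 → ((r * x : ℝ) : 𝕋) ∈ Tplus) : |x| ≤ a := by
  by_contra! hxa
  have hx : 0 < |x| := ha.trans hxa
  set r := min (1 / (4 * a)) (1 / (2 * |x|))
  have hr : 0 ≤ r := le_min (by positivity) (by positivity)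
  have hra : |r| * a ≤ 1 / 4 := by
    rw [abs_of_nonneg hr]
    calc r * a ≤ 1 / (4 * a) * a := by gcongr; exact min_le_left _ _
      _ = 1 / 4 := by field_simp
  -- `r|x| = min (|x|/(4a)) (1/2)` lies in `(1/4, 1/2]`, which misses `T₊`.
  have hrx : r * |x| = min (|x| / (4 * a)) (1 / 2) := by
    rw [min_mul_of_nonneg _ _ hx.le]
    congr 1 <;> field_simp
  have hlow : 1 / 4 < r * |x| := by
    rw [hrx]
    refine lt_min ?_ (by norm_num)
    rw [lt_div_iff₀ (by positivity)]
    linarith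
  have hup : |r * x| < 3 / 4 := by
    rw [abs_mul, abs_of_nonneg hr, hrx]
    exact (min_le_right _ _).trans_lt (by norm_num)
  have := abs_le_of_coe_mem_Tplus hup (h r hra)
  rw [abs_mul, abs_of_nonneg hr] at this
  linarith

theorem abs_le_of_mem_qcHull {Y : Set ℝ} {a x : ℝ} (ha : 0 < a) (hY : ∀ y ∈ Y, |y| ≤ a)
    (hx : x ∈ qcHull ℝ Y) : |x| ≤ a := by
  refine abs_le_of_forall_coe_mul_mem_Tplus ha fun r hr => hx (realChar r) ⟨continuous_realChar r,
    fun y hy => ⟨r * y, ?_, rfl⟩⟩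
  rw [abs_mul]
  exact (mul_le_mul_of_nonneg_left (hY y hy) (abs_nonneg r)).trans hr

theorem stmt16_general (Y : Set ℝ) (α : ℝ) (hα : α ≠ 0)
    (hsub : ∀ y ∈ Y, α * y ∈ Set.Ioo (-(1 / 2) : ℝ) (1 / 2))
    (hqc : qcHull 𝕋 ((fun y : ℝ => ((α * y : ℝ) : 𝕋)) '' Y)
      = (fun y : ℝ => ((α * y : ℝ) : 𝕋)) '' Y) :
    qcHull ℝ Y = Y := by
  refine Set.Subset.antisymm ?_ (subset_qcHull Y)
  intro x hx
  have hαY : ∀ y ∈ Y, |α * y| < 1 / 2 := fun y hy => abs_lt.2 (hsub y hy)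
  obtain ⟨y, hy, hxy⟩ : ((α * x : ℝ) : 𝕋) ∈ (fun y : ℝ => ((α * y : ℝ) : 𝕋)) '' Y := by
    rw [← hqc, ← coe_realChar]
    exact map_mem_qcHull _ (continuous_realChar α) hx
  have hαx : |α * x| ≤ 1 / 2 :=
    abs_le_of_mem_qcHull (Y := AddMonoidHom.mulLeft α '' Y) (by norm_num)
      (by rintro _ ⟨z, hz, rfl⟩; exact (hαY z hz).le)
      (map_mem_qcHull _ (continuous_const_mul α) hx)
  have hlift : α * y = α * x := AddCircle.eq_of_coe_eq_of_abs_sub_lt hxy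
    ((abs_sub _ _).trans_lt (by linarith [hαY y hy]))
  rwa [← mul_left_cancel₀ hα hlift]

/-- a compact `Y ⊆ ℝ` with `α·Y ⊆ (-1/2, 1/2)` and `π(α·Y)`
quasi-convex in `𝕋` (for some `α ≠ 0`) is quasi-convex in `ℝ`. -/
theorem stmt16 (Y : Set ℝ) (hY : IsCompact Y) (α : ℝ) (hα : α ≠ 0)
    (hsub : ∀ y ∈ Y, α * y ∈ Set.Ioo (-(1 / 2) : ℝ) (1 / 2))
    (hqc : qcHull 𝕋 ((fun y : ℝ => ((α * y : ℝ) : 𝕋)) '' Y)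
      = (fun y : ℝ => ((α * y : ℝ) : 𝕋)) '' Y) :
    qcHull ℝ Y = Y :=
  stmt16_general Y α hα hsub hqc
end
end
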